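/- For all x ∈ 𝔫_l and all y ∈ 𝔤 with ⁅f,y⁆ = 0, the element ⁅x, y + e⁆ lies in 𝔪_l^⊥; that is, κ(⁅x, y + e⁆, z) = 0 for every z ∈ 𝔪_l. -/

import Mathlib

open LieAlgebra

variable {L : Type*} [LieRing L] [LieAlgebra ℂ L]

/-- The eigenspace `𝔤ᵢ` of `ad h` with eigenvalue `i ∈ ℤ`. -/
noncomputable def gEig (h : L) (i : ℤ) : Submodule ℂ L :=
  Module.End.eigenspace ((ad ℂ L h)) (i : ℂ)

/-- `𝔤_{≤k}`, the sum of the eigenspaces `𝔤ᵢ` for `i ≤ k`. -/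
noncomputable def gLe (h : L) (k : ℤ) : Submodule ℂ L :=
  ⨆ i ∈ Set.Iic k, gEig h i

/-- `l^{⊥ω} = {y ∈ 𝔤₋₁ : ω(x, y) = 0 for all x ∈ l}`, where `ω(x, y) = κ(⁅x, y⁆, e)`. -/
noncomputable def lPerpOmega (e h : L) (l : Submodule ℂ L) : Submodule ℂ L :=
  gEig h (-1) ⊓
    ⨅ x ∈ l, LinearMap.ker (((killingForm ℂ L).flip e).comp (ad ℂ L x))

/-- `𝔫_l = l + 𝔤_{≤ -2}`. -/
noncomputable def nSub (h : L) (l : Submodule ℂ L) : Submodule ℂ L :=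
  l ⊔ gLe h (-2)

/-- `𝔪_l = l^{⊥ω} + 𝔤_{≤ -2}`. -/
noncomputable def mSub (e h : L) (l : Submodule ℂ L) : Submodule ℂ L :=
  lPerpOmega e h l ⊔ gLe h (-2)

/-!
Split `κ(⁅x, y + e⁆, z)` into two terms. By invariance, `κ(⁅x, y⁆, z) = -κ(y, ⁅x, z⁆)` with
`⁅x, z⁆ ∈ 𝔤_{≤-2}`; and `ker (ad f)` is `κ`-orthogonal to every `𝔤ᵢ` with `i < 0`, because
`κ(·, w)` for `w ∈ 𝔤ᵢ` is a functional on `ker (ad f)` transforming under `ad h` with weight `-i`,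
while the `ad h`-eigenvalues on `ker (ad f)` (lowest weights of `𝔰𝔩₂`-modules) are `≤ 0`.
In `κ(⁅x, e⁆, z)` every graded piece pairs to zero by degree, except the `𝔤₋₁ × 𝔤₋₁` piece,
which is `ω(x, z) = 0` by the definition of `l^{⊥ω}`.
-/

section Grading

variable {h : L}

lemma mem_gEig_iff {a : L} {i : ℤ} : a ∈ gEig h i ↔ ⁅h, a⁆ = (i : ℂ) • a := by
  rw [gEig, Module.End.mem_eigenspace_iff, ad_apply]

lemma gEig_le_gLe {i k : ℤ} (hik : i ≤ k) : gEig h i ≤ gLe h k :=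
  le_iSup₂ (f := fun i (_ : i ∈ Set.Iic k) => gEig h i) i hik

lemma gLe_mono : Monotone (gLe h) := fun _ _ hk =>
  iSup₂_le fun _ hi => gEig_le_gLe (le_trans hi hk)

lemma apply_apply_mem_of_mem_gLe {M : Type*} [AddCommGroup M] [Module ℂ M]
    (B : L →ₗ[ℂ] L →ₗ[ℂ] M) {N : Submodule ℂ M} {p q : ℤ}
    (hB : ∀ i ≤ p, ∀ j ≤ q, ∀ a ∈ gEig h i, ∀ b ∈ gEig h j, B a b ∈ N)
    {a b : L} (ha : a ∈ gLe h p) (hb : b ∈ gLe h q) : B a b ∈ N := by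
  refine Submodule.map₂_le.mp ?_ a ha b hb
  simp only [gLe, Submodule.map₂_iSup_left, Submodule.map₂_iSup_right, iSup_le_iff,
    Submodule.map₂_le]
  exact fun j hj i hi => hB i hi j hj

lemma lie_mem_gEig_add {a b : L} {i j : ℤ} (ha : a ∈ gEig h i) (hb : b ∈ gEig h j) :
    ⁅a, b⁆ ∈ gEig h (i + j) := by
  rw [mem_gEig_iff] at ha hb ⊢
  rw [leibniz_lie, ha, hb, smul_lie, lie_smul, Int.cast_add, add_smul]

lemma lie_mem_gLe_add {a b : L} {p q : ℤ} (ha : a ∈ gLe h p) (hb : b ∈ gLe h q) :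
    ⁅a, b⁆ ∈ gLe h (p + q) :=
  apply_apply_mem_of_mem_gLe (ad ℂ L : L →ₗ[ℂ] Module.End ℂ L)
    (fun _ hi _ hj _ ha _ hb => gEig_le_gLe (add_le_add hi hj) (lie_mem_gEig_add ha hb)) ha hb

lemma killingForm_eq_zero_of_mem_gEig {a b : L} {i j : ℤ} (ha : a ∈ gEig h i)
    (hb : b ∈ gEig h j) (hij : i + j ≠ 0) : killingForm ℂ L a b = 0 := by
  rw [mem_gEig_iff] at ha hb
  have hinv : killingForm ℂ L ⁅h, a⁆ b = -killingForm ℂ L a ⁅h, b⁆ :=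
    LieModule.traceForm_apply_lie_apply' ℂ L L h a b
  rw [ha, hb, LinearMap.map_smul₂, map_smul, smul_eq_mul, smul_eq_mul] at hinv
  have hsum : ((i + j : ℤ) : ℂ) * killingForm ℂ L a b = 0 := by
    push_cast
    linear_combination hinv
  exact (mul_eq_zero.mp hsum).resolve_left (Int.cast_ne_zero.mpr hij)

lemma killingForm_eq_zero_of_mem_gLe {a b : L} {p q : ℤ} (ha : a ∈ gLe h p)
    (hb : b ∈ gLe h q) (hpq : p + q < 0) : killingForm ℂ L a b = 0 :=
  apply_apply_mem_of_mem_gLe (killingForm ℂ L) (N := ⊥)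
    (fun _ hi _ hj _ ha _ hb => killingForm_eq_zero_of_mem_gEig ha hb (by omega)) ha hb

end Grading

lemma LinearMap.eq_zero_of_comp_eq_smul {K V : Type*} [Field K] [AddCommGroup V] [Module K V]
    [FiniteDimensional K V] {T : Module.End K V} {c : K} (hc : ¬T.HasEigenvalue c)
    {φ : V →ₗ[K] K} (hφ : φ ∘ₗ T = c • φ) : φ = 0 := by
  have hinj : Function.Injective (T - c • (1 : Module.End K V)) := by
    rw [← LinearMap.ker_eq_bot, ← Module.End.eigenspace_def]
    exact not_not.mp hc
  ext v
  obtain ⟨u, rfl⟩ := LinearMap.injective_iff_surjective.mp hinj v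
  have hφu : φ (T u) = c * φ u := LinearMap.congr_fun hφ u
  simp [hφu]

namespace IsSl2Triple

variable {L M : Type*} [LieRing L] [AddCommGroup M] [LieRingModule L M] {h e f : L}

lemma lie_f_lie_h_eq_zero (t : IsSl2Triple h e f) {m : M} (hfm : ⁅f, m⁆ = 0) :
    ⁅f, ⁅h, m⁆⁆ = 0 := by
  rw [leibniz_lie, hfm, lie_zero, add_zero, ← lie_skew, t.lie_h_f_nsmul, neg_neg, nsmul_lie, hfm,
    smul_zero]

lemma exists_nat_eq_neg_of_lie_f_eq_zero [LieAlgebra ℂ L] [Module ℂ M] [LieModule ℂ L M]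
    [Module.Finite ℂ M] (t : IsSl2Triple h e f) {m : M} {μ : ℂ} (hm : m ≠ 0) (hfm : ⁅f, m⁆ = 0)
    (hhm : ⁅h, m⁆ = μ • m) : ∃ n : ℕ, μ = -n := by
  have P : t.symm.HasPrimitiveVectorWith m (-μ) :=
    ⟨hm, by rw [neg_lie, hhm, neg_smul], hfm⟩
  obtain ⟨n, hn⟩ := P.exists_nat
  exact ⟨n, by rw [← hn, neg_neg]⟩

lemma of_lie_eq_smul [LieAlgebra ℂ L] (he : e ≠ 0) (hhe : ⁅h, e⁆ = (2 : ℂ) • e)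
    (hhf : ⁅h, f⁆ = (-2 : ℂ) • f) (hef : ⁅e, f⁆ = h) : IsSl2Triple h e f where
  h_ne_zero := by
    rintro rfl
    exact he ((smul_eq_zero.mp (hhe.symm.trans (zero_lie e))).resolve_left two_ne_zero)
  lie_e_f := hef
  lie_h_e_nsmul := by rw [hhe, ofNat_smul_eq_nsmul]
  lie_h_f_nsmul := by rw [hhf, neg_smul, ofNat_smul_eq_nsmul]

end IsSl2Triple

section KerAdF

variable [Module.Finite ℂ L] {h e f : L}

lemma killingForm_eq_zero_of_lie_f_eq_zero_of_mem_gEig (t : IsSl2Triple h e f) {y w : L}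
    (hy : ⁅f, y⁆ = 0) {i : ℤ} (hi : i < 0) (hw : w ∈ gEig h i) : killingForm ℂ L y w = 0 := by
  let S : Submodule ℂ L := LinearMap.ker (ad ℂ L f)
  have hS : ∀ s ∈ S, ad ℂ L h s ∈ S := fun s hs => t.lie_f_lie_h_eq_zero hs
  let H : Module.End ℂ S := (ad ℂ L h).restrict hS
  let φ : S →ₗ[ℂ] ℂ := (killingForm ℂ L).flip w ∘ₗ S.subtype
  have hφ : φ ∘ₗ H = (-(i : ℂ)) • φ := by
    ext s
    have hinv := LieModule.traceForm_apply_lie_apply' ℂ L L h s w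
    rw [mem_gEig_iff.mp hw, map_smul, smul_eq_mul] at hinv
    simpa [φ, H] using hinv
  have hH : ¬H.HasEigenvalue (-(i : ℂ)) := by
    intro hev
    obtain ⟨⟨v, hvS⟩, hv⟩ := hev.exists_hasEigenvector
    have hvh : ⁅h, v⁆ = (-(i : ℂ)) • v := congr_arg Subtype.val hv.apply_eq_smul
    obtain ⟨n, hn⟩ := t.exists_nat_eq_neg_of_lie_f_eq_zero (by simpa using hv.2) hvS hvh
    have hin : i = n := by exact_mod_cast neg_injective hn
    omega
  exact LinearMap.congr_fun (LinearMap.eq_zero_of_comp_eq_smul hH hφ) ⟨y, hy⟩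

lemma killingForm_eq_zero_of_lie_f_eq_zero_of_mem_gLe (t : IsSl2Triple h e f) {y w : L}
    (hy : ⁅f, y⁆ = 0) {k : ℤ} (hk : k < 0) (hw : w ∈ gLe h k) : killingForm ℂ L y w = 0 := by
  have hle : gLe h k ≤ LinearMap.ker (killingForm ℂ L y) := iSup₂_le fun _ hi _ hv =>
    killingForm_eq_zero_of_lie_f_eq_zero_of_mem_gEig t hy (lt_of_le_of_lt hi hk) hv
  exact hle hw

end KerAdF

section Slice

variable {e h : L} {l : Submodule ℂ L}

lemma nSub_le_gLe (hl : l ≤ gEig h (-1)) : nSub h l ≤ gLe h (-1) :=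
  sup_le (hl.trans (gEig_le_gLe le_rfl)) (gLe_mono (by norm_num))

lemma mSub_le_gLe : mSub e h l ≤ gLe h (-1) :=
  sup_le (inf_le_left.trans (gEig_le_gLe le_rfl)) (gLe_mono (by norm_num))

lemma killingForm_lie_e_eq_zero_of_mem_lPerpOmega {x z : L} (hx : x ∈ l)
    (hz : z ∈ lPerpOmega e h l) : killingForm ℂ L ⁅x, e⁆ z = 0 := by
  have hxz : killingForm ℂ L ⁅x, z⁆ e = 0 := by
    simpa using (Submodule.mem_iInf _).mp ((Submodule.mem_iInf _).mp hz.2 x) hx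
  rw [LieModule.traceForm_apply_lie_apply', LieModule.traceForm_comm, hxz, neg_zero]

lemma killingForm_lie_e_eq_zero_of_mem_nSub_of_mem_mSub (hl : l ≤ gEig h (-1))
    (he : e ∈ gEig h 2) {x z : L} (hx : x ∈ nSub h l) (hz : z ∈ mSub e h l) :
    killingForm ℂ L ⁅x, e⁆ z = 0 := by
  obtain ⟨x₁, hx₁, x₂, hx₂, rfl⟩ := Submodule.mem_sup.mp hx
  obtain ⟨z₁, hz₁, z₂, hz₂, rfl⟩ := Submodule.mem_sup.mp hz
  have he' : e ∈ gLe h 2 := gEig_le_gLe le_rfl he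
  have hx₁e := lie_mem_gLe_add (gEig_le_gLe le_rfl (hl hx₁)) he'
  have hx₂e := lie_mem_gLe_add hx₂ he'
  have hz₁' : z₁ ∈ gLe h (-1) := gEig_le_gLe le_rfl hz₁.1
  simp only [add_lie, map_add, LinearMap.add_apply,
    killingForm_lie_e_eq_zero_of_mem_lPerpOmega hx₁ hz₁,
    killingForm_eq_zero_of_mem_gLe hx₁e hz₂ (by norm_num),
    killingForm_eq_zero_of_mem_gLe hx₂e hz₁' (by norm_num),
    killingForm_eq_zero_of_mem_gLe hx₂e hz₂ (by norm_num), add_zero]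

end Slice

theorem stmt2_general {L : Type*} [LieRing L] [LieAlgebra ℂ L]
    [Module.Finite ℂ L]
    (e h f : L) (he : e ≠ 0)
    (hhe : ⁅h, e⁆ = (2 : ℂ) • e) (hhf : ⁅h, f⁆ = (-2 : ℂ) • f) (hef : ⁅e, f⁆ = h)
    (l : Submodule ℂ L) (hl : l ≤ gEig h (-1)) :
    ∀ x ∈ nSub h l, ∀ y : L, ⁅f, y⁆ = 0 →
      ∀ z ∈ mSub e h l, killingForm ℂ L ⁅x, y + e⁆ z = 0 := by
  intro x hx y hy z hz
  have t : IsSl2Triple h e f := .of_lie_eq_smul he hhe hhf hef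
  have he₂ : e ∈ gEig h 2 := mem_gEig_iff.mpr (by rw [hhe]; norm_num)
  have hxz := lie_mem_gLe_add (nSub_le_gLe hl hx) (mSub_le_gLe hz)
  rw [lie_add, map_add, LinearMap.add_apply, LieModule.traceForm_apply_lie_apply',
    killingForm_eq_zero_of_lie_f_eq_zero_of_mem_gLe t hy (by norm_num) hxz,
    killingForm_lie_e_eq_zero_of_mem_nSub_of_mem_mSub hl he₂ hx hz, neg_zero, add_zero]

/-- For `x ∈ 𝔫_l` and `y ∈ ker (ad f)`, the element `⁅x, y + e⁆` lies in
`𝔪_l^⊥`, i.e. `κ(⁅x, y + e⁆, z) = 0` for every `z ∈ 𝔪_l`. -/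
theorem stmt2 {L : Type*} [LieRing L] [LieAlgebra ℂ L]
    [Module.Finite ℂ L] [LieAlgebra.IsSemisimple ℂ L]
    (e h f : L) (he : e ≠ 0)
    (hhe : ⁅h, e⁆ = (2 : ℂ) • e) (hhf : ⁅h, f⁆ = (-2 : ℂ) • f) (hef : ⁅e, f⁆ = h)
    (l : Submodule ℂ L) (hl : l ≤ gEig h (-1))
    (hiso : ∀ x ∈ l, ∀ y ∈ l, killingForm ℂ L ⁅x, y⁆ e = 0) :
    ∀ x ∈ nSub h l, ∀ y : L, ⁅f, y⁆ = 0 →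
      ∀ z ∈ mSub e h l, killingForm ℂ L ⁅x, y + e⁆ z = 0 :=
  stmt2_general e h f he hhe hhf hef l hl
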